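/- Let d ≥ 2 and k ∈ {1,…,d−1}. Let (r₁,r₂,r₃) be a strictly admissible triple of positive reals. Then for every y₃ ∈ ℝ^{d−k} with |y₃| < r₃, the set S(y₃) of all pairs (y₁,y₂) ∈ ℝ^{d−k} × ℝ^{d−k} such that |y_j| < r_j for j = 1,2, y₁ + y₂ + y₃ = 0, and the triple ((r₁²−|y₁|²)^{1/2}, (r₂²−|y₂|²)^{1/2}, (r₃²−|y₃|²)^{1/2}) is strictly admissible, is nonempty, and the set {y₁ ∈ ℝ^{d−k} : (y₁, −y₁−y₃) ∈ S(y₃)} has positive (d−k)-dimensional Lebesgue measure; moreover this measure is a lower semicontinuous function of (y₃, r₁, r₂, r₃). -/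

import Mathlib

/-! Take `y₁ = α y₃` and `y₂ = -(1 + α) y₃` with `α = (r₂² - r₁² - r₃²) / (2 r₃²)`. Heron's
quantity of the sliced radii is then `(1 - |y₃|² / r₃²)` times that of `(r₁, r₂, r₃)`:
geometrically, the triangle with sides `r_j` is compressed along its side `r₃`, so it stays
nondegenerate. All defining conditions of `S(y₃)` are strict inequalities between continuous
functions of `(y₁, y₃, r)`, so the admissible `y₁` form the sections of one open set; such sections
have positive measure and, by inner regularity and the tube lemma, a lower semicontinuous one. -/

open MeasureTheory Metric Filter
open scoped ENNReal Pointwise Topology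

noncomputable section

abbrev Euc (d : ℕ) : Type := EuclideanSpace ℝ (Fin d)

/-- The Riesz–Sobolev trilinear form
`𝒯(E₁,E₂,E₃) = ∫∫ 1_{E₁}(x) 1_{E₂}(y) 1_{E₃}(-x-y) dx dy`. -/
noncomputable def Ttri {d : ℕ} (E₁ E₂ E₃ : Set (Euc d)) : ℝ :=
  ∫ x : Euc d, ∫ y : Euc d,
    E₁.indicator (fun _ => (1:ℝ)) x * E₂.indicator (fun _ => (1:ℝ)) y *
      E₃.indicator (fun _ => (1:ℝ)) (-x - y)

/-- `E^•` : the closed ball centered at `0` with the same volume as `E`. -/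
noncomputable def ballSym {d : ℕ} (E : Set (Euc d)) : Set (Euc d) :=
  Metric.closedBall 0
    (((volume E).toReal / (volume (Metric.closedBall (0 : Euc d) 1)).toReal) ^ (1 / (d:ℝ)))

/-- `τ`-admissibility of an ordered triple of positive reals. -/
def TauAdm (τ r₁ r₂ r₃ : ℝ) : Prop :=
  0 < r₁ ∧ 0 < r₂ ∧ 0 < r₃ ∧
  r₁ + r₂ ≥ r₃ + τ * max r₁ (max r₂ r₃) ∧
  r₂ + r₃ ≥ r₁ + τ * max r₁ (max r₂ r₃) ∧
  r₁ + r₃ ≥ r₂ + τ * max r₁ (max r₂ r₃)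

/-- `τ`-admissibility of an ordered triple of sets. -/
def TauAdmSets (d : ℕ) (τ : ℝ) (E₁ E₂ E₃ : Set (Euc d)) : Prop :=
  TauAdm τ ((volume E₁).toReal ^ (1/(d:ℝ))) ((volume E₂).toReal ^ (1/(d:ℝ)))
    ((volume E₃).toReal ^ (1/(d:ℝ)))

/-- Strict admissibility of a triple of positive reals. -/
def StrictAdm (r₁ r₂ r₃ : ℝ) : Prop :=
  0 < r₁ ∧ 0 < r₂ ∧ 0 < r₃ ∧ r₁ < r₂ + r₃ ∧ r₂ < r₁ + r₃ ∧ r₃ < r₁ + r₂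

/-- An ellipsoid: image of the closed unit ball under an invertible affine map. -/
def IsEllipsoid (d : ℕ) (S : Set (Euc d)) : Prop :=
  ∃ (A : Euc d ≃ₗ[ℝ] Euc d) (v : Euc d),
    S = (fun x => A x + v) '' Metric.closedBall 0 1

/-- An ellipsoid centered at `0`. -/
def IsCenteredEllipsoid (d : ℕ) (S : Set (Euc d)) : Prop :=
  ∃ A : Euc d ≃ₗ[ℝ] Euc d, S = (fun x => A x) '' Metric.closedBall 0 1

/-- Assemble a point of `ℝ^d` from its first `d-1` coordinates and its last one. -/
def join (d : ℕ) (x' : Euc (d-1)) (t : ℝ) : Euc d :=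
  WithLp.toLp 2 (fun (i : Fin d) => if h : (i:ℕ) < d - 1 then x' ⟨i, h⟩ else t)

/-- The first `d-1` coordinates. -/
def projHead (d : ℕ) (x : Euc d) : Euc (d-1) :=
  WithLp.toLp 2 (fun (i : Fin (d-1)) => x ⟨i, lt_of_lt_of_le i.2 (Nat.sub_le d 1)⟩)

/-- The last coordinate. -/
def lastC (d : ℕ) (x : Euc d) : ℝ :=
  if h : 0 < d then x ⟨d-1, Nat.sub_lt h one_pos⟩ else 0

/-- Vertical slice `E^{x'} = {t : (x',t) ∈ E}`. -/
def sliceV (d : ℕ) (E : Set (Euc d)) (x' : Euc (d-1)) : Set ℝ :=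
  {t : ℝ | join d x' t ∈ E}

/-- Horizontal slice `E_t = {y' : (y',t) ∈ E}`. -/
def sliceH (d : ℕ) (E : Set (Euc d)) (t : ℝ) : Set (Euc (d-1)) :=
  {y' | join d y' t ∈ E}

/-- Steiner symmetrization in the last coordinate. -/
noncomputable def steiner (d : ℕ) (E : Set (Euc d)) : Set (Euc d) :=
  {x | ∃ x' t, x = join d x' t ∧ 0 < volume (sliceV d E x') ∧
      ENNReal.ofReal (2 * |t|) ≤ volume (sliceV d E x')}

/-- Schwarz symmetrization in the first `d-1` coordinates. -/
noncomputable def schwarz (d : ℕ) (E : Set (Euc d)) : Set (Euc d) :=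
  {x | ∃ x' t, x = join d x' t ∧ 0 < volume (sliceH d E t) ∧
      ENNReal.ofReal
        ((volume (Metric.closedBall (0 : Euc (d-1)) 1)).toReal * ‖x'‖ ^ (d-1))
        ≤ volume (sliceH d E t)}

/-- `E^{†★} = (E^†)^★`. -/
noncomputable def dagStar (d : ℕ) (E : Set (Euc d)) : Set (Euc d) :=
  steiner d (schwarz d E)

/-- `E'_k = {x' : 2^k ≤ |E^{x'}| < 2^{k+1}}`. -/
noncomputable def layerBase (d : ℕ) (E : Set (Euc d)) (k : ℤ) : Set (Euc (d-1)) :=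
  {x' | ENNReal.ofReal ((2:ℝ) ^ k) ≤ volume (sliceV d E x') ∧
        volume (sliceV d E x') < ENNReal.ofReal ((2:ℝ) ^ (k+1))}

/-- `E_k = {x ∈ E : x' ∈ E'_k}`. -/
noncomputable def layer (d : ℕ) (E : Set (Euc d)) (k : ℤ) : Set (Euc d) :=
  {x ∈ E | projHead d x ∈ layerBase d E k}

/-- A special dilation `(x₁,…,x_d) ↦ (r x₁,…, r x_{d-1}, ρ x_d)`. -/
def spDil (d : ℕ) (r ρ : ℝ) (x : Euc d) : Euc d :=
  WithLp.toLp 2 (fun (i : Fin d) => if (i:ℕ) < d - 1 then r * x i else ρ * x i)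

/-- A vertical skew-shift `(x', x_d) ↦ (x', x_d + ℓ(x'))`. -/
noncomputable def skewShift (d : ℕ) (ℓ : Euc (d-1) →ᵃ[ℝ] ℝ) (x : Euc d) : Euc d :=
  join d (projHead d x) (lastC d x + ℓ (projHead d x))

/-- Assemble a point of `ℝ^d = ℝ^{d-k} × ℝ^k`. -/
def joinP (d k : ℕ) (y : Euc (d-k)) (z : Euc k) : Euc d :=
  WithLp.toLp 2 (fun (i : Fin d) => if h : (i:ℕ) < d - k then y ⟨i, h⟩
    else if h2 : (i:ℕ) - (d-k) < k then z ⟨(i:ℕ) - (d-k), h2⟩ else 0)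

/-- Slice `E^{y} = {z ∈ ℝ^k : (y,z) ∈ E}`. -/
def sliceK (d k : ℕ) (E : Set (Euc d)) (y : Euc (d-k)) : Set (Euc k) :=
  {z | joinP d k y z ∈ E}

/-- Projection `π(E) = {y : E^y ≠ ∅}`. -/
def projK (d k : ℕ) (E : Set (Euc d)) : Set (Euc (d-k)) :=
  {y | (sliceK d k E y).Nonempty}

/-- The closed ball centered at `0` of prescribed volume `γ` (a point if `γ = 0`). -/
noncomputable def ballOfVol (d : ℕ) (γ : ℝ) : Set (Euc d) :=
  Metric.closedBall 0
    ((γ / (volume (Metric.closedBall (0 : Euc d) 1)).toReal) ^ (1/(d:ℝ)))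

/-- `Λ_d(γ₁,γ₂,γ₃) = 𝒯(B₁,B₂,B₃)` for balls of volumes `γ_j` centered at `0`. -/
noncomputable def Lam (d : ℕ) (γ₁ γ₂ γ₃ : ℝ) : ℝ :=
  Ttri (ballOfVol d γ₁) (ballOfVol d γ₂) (ballOfVol d γ₃)

/-- `rℰ + v`. -/
def scaleShift (d : ℕ) (r : ℝ) (v : Euc d) (S : Set (Euc d)) : Set (Euc d) :=
  (fun x => r • x + v) '' S

end
/-- The set `S(y₃)` of Lemma 3.1. -/
def Sset (n : ℕ) (r₁ r₂ r₃ : ℝ) (y₃ : Euc n) : Set (Euc n × Euc n) :=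
  {p | ‖p.1‖ < r₁ ∧ ‖p.2‖ < r₂ ∧ p.1 + p.2 + y₃ = 0 ∧
    StrictAdm (Real.sqrt (r₁^2 - ‖p.1‖^2)) (Real.sqrt (r₂^2 - ‖p.2‖^2))
      (Real.sqrt (r₃^2 - ‖y₃‖^2))}

/-- Sixteen times the squared area of a triangle with squared side lengths `S₁`, `S₂`, `S₃`. -/
def heron (S₁ S₂ S₃ : ℝ) : ℝ := 4 * S₁ * S₃ - (S₂ - S₁ - S₃) ^ 2

theorem heron_sq (x y z : ℝ) :
    heron (x ^ 2) (y ^ 2) (z ^ 2) = (x + y + z) * (-x + y + z) * (x - y + z) * (x + y - z) := by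
  unfold heron; ring

theorem StrictAdm.heron_pos {x y z : ℝ} (h : StrictAdm x y z) :
    0 < heron (x ^ 2) (y ^ 2) (z ^ 2) := by
  obtain ⟨hx, hy, hz, hyz, hxz, hxy⟩ := h
  rw [heron_sq]
  have : 0 < x + y + z := by linarith
  have : 0 < -x + y + z := by linarith
  have : 0 < x - y + z := by linarith
  have : 0 < x + y - z := by linarith
  positivity

theorem strictAdm_of_heron_pos {x y z : ℝ} (hx : 0 < x) (hy : 0 < y) (hz : 0 < z)
    (h : 0 < heron (x ^ 2) (y ^ 2) (z ^ 2)) : StrictAdm x y z := by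
  unfold heron at h
  have hlt : |y ^ 2 - x ^ 2 - z ^ 2| < 2 * x * z :=
    abs_lt_of_sq_lt_sq (by linarith) (by positivity)
  obtain ⟨hlo, hhi⟩ := abs_lt.1 hlt
  have hy_lt : y < x + z := by nlinarith
  obtain ⟨hzx, hxz⟩ := abs_lt.1 (abs_lt_of_sq_lt_sq (by nlinarith) hy.le : |x - z| < y)
  exact ⟨hx, hy, hz, by linarith, hy_lt, by linarith⟩

theorem pos_of_heron_pos {S₁ S₂ S₃ : ℝ} (hS₃ : 0 < S₃) (h : 0 < heron S₁ S₂ S₃) :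
    0 < S₁ ∧ 0 < S₂ := by
  unfold heron at h
  constructor <;> nlinarith [sq_nonneg (S₂ - S₁ - S₃), sq_nonneg (S₁ - S₂ - S₃)]

theorem strictAdm_sqrt_of_heron_pos {S₁ S₂ S₃ : ℝ} (hS₃ : 0 < S₃) (h : 0 < heron S₁ S₂ S₃) :
    StrictAdm √S₁ √S₂ √S₃ := by
  obtain ⟨hS₁, hS₂⟩ := pos_of_heron_pos hS₃ h
  refine strictAdm_of_heron_pos (Real.sqrt_pos.2 hS₁) (Real.sqrt_pos.2 hS₂) (Real.sqrt_pos.2 hS₃) ?_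
  rwa [Real.sq_sqrt hS₁.le, Real.sq_sqrt hS₂.le, Real.sq_sqrt hS₃.le]

/-- `⟪x₁, x₃⟫ / ‖x₃‖²` for any `x₁ + x₂ + x₃ = 0` with `‖x_j‖ = r_j`. -/
noncomputable def sliceCoeff (r₁ r₂ r₃ : ℝ) : ℝ := (r₂ ^ 2 - r₁ ^ 2 - r₃ ^ 2) / (2 * r₃ ^ 2)

theorem heron_slice (r₁ r₂ r₃ a : ℝ) (hr₃ : r₃ ≠ 0) :
    heron (r₁ ^ 2 - (sliceCoeff r₁ r₂ r₃ * a) ^ 2) (r₂ ^ 2 - ((1 + sliceCoeff r₁ r₂ r₃) * a) ^ 2)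
      (r₃ ^ 2 - a ^ 2) = (r₃ ^ 2 - a ^ 2) / r₃ ^ 2 * heron (r₁ ^ 2) (r₂ ^ 2) (r₃ ^ 2) := by
  unfold heron sliceCoeff
  field_simp
  ring

theorem smul_mem_Sset {n : ℕ} {r₁ r₂ r₃ : ℝ} (h : StrictAdm r₁ r₂ r₃) {y₃ : Euc n}
    (hy : ‖y₃‖ < r₃) :
    (sliceCoeff r₁ r₂ r₃ • y₃, -(sliceCoeff r₁ r₂ r₃ • y₃) - y₃) ∈ Sset n r₁ r₂ r₃ y₃ := by
  set α := sliceCoeff r₁ r₂ r₃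
  obtain ⟨hr₁, hr₂, hr₃, -⟩ := id h
  have norm₁ : ‖α • y₃‖ ^ 2 = (α * ‖y₃‖) ^ 2 := by
    rw [norm_smul, Real.norm_eq_abs, mul_pow, sq_abs, mul_pow]
  have norm₂ : ‖-(α • y₃) - y₃‖ ^ 2 = ((1 + α) * ‖y₃‖) ^ 2 := by
    rw [show -(α • y₃) - y₃ = -((1 + α) • y₃) by module, norm_neg, norm_smul, Real.norm_eq_abs,
      mul_pow, sq_abs, mul_pow]
  have hS₃ : 0 < r₃ ^ 2 - ‖y₃‖ ^ 2 := by nlinarith [norm_nonneg y₃]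
  have hH : 0 < heron (r₁ ^ 2 - ‖α • y₃‖ ^ 2) (r₂ ^ 2 - ‖-(α • y₃) - y₃‖ ^ 2)
      (r₃ ^ 2 - ‖y₃‖ ^ 2) := by
    rw [norm₁, norm₂, heron_slice _ _ _ _ hr₃.ne']
    exact mul_pos (div_pos hS₃ (by positivity)) h.heron_pos
  obtain ⟨hS₁, hS₂⟩ := pos_of_heron_pos hS₃ hH
  exact ⟨lt_of_pow_lt_pow_left₀ 2 hr₁.le (by linarith),
    lt_of_pow_lt_pow_left₀ 2 hr₂.le (by linarith), by module, strictAdm_sqrt_of_heron_pos hS₃ hH⟩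

theorem isOpen_setOf_strictAdm : IsOpen {r : ℝ × ℝ × ℝ | StrictAdm r.1 r.2.1 r.2.2} := by
  unfold StrictAdm
  repeat' apply IsOpen.and
  all_goals exact isOpen_lt (by fun_prop) (by fun_prop)

theorem isOpen_setOf_mem_Sset (n : ℕ) :
    IsOpen {q : (Euc n × ℝ × ℝ × ℝ) × Euc n |
      (q.2, -q.2 - q.1.1) ∈ Sset n q.1.2.1 q.1.2.2.1 q.1.2.2.2 q.1.1} := by
  have hsum (y y₃ : Euc n) : y + (-y - y₃) + y₃ = 0 := by abel
  simp only [Sset, Set.mem_ofPred_eq, hsum, true_and]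
  refine (isOpen_lt (by fun_prop) (by fun_prop)).and ((isOpen_lt (by fun_prop) (by fun_prop)).and
    (isOpen_setOf_strictAdm.preimage (f := fun q : (Euc n × ℝ × ℝ × ℝ) × Euc n =>
      (√(q.1.2.1 ^ 2 - ‖q.2‖ ^ 2), √(q.1.2.2.1 ^ 2 - ‖-q.2 - q.1.1‖ ^ 2),
        √(q.1.2.2.2 ^ 2 - ‖q.1.1‖ ^ 2))) (by fun_prop)))

theorem IsOpen.lowerSemicontinuous_measure_preimage_prodMk {X Y : Type*} [TopologicalSpace X]
    [TopologicalSpace Y] [MeasurableSpace Y] (μ : Measure Y) [μ.Regular] {W : Set (X × Y)}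
    (hW : IsOpen W) : LowerSemicontinuous fun x => μ (Prod.mk x ⁻¹' W) := by
  intro x r hr
  obtain ⟨K, hKW, hK, hrK⟩ := (hW.preimage (Continuous.prodMk_right x)).exists_lt_isCompact hr
  have hKW' : ∀ᶠ x' in 𝓝 x, ∀ y ∈ K, (x', y) ∈ W :=
    hK.eventually_forall_of_forall_eventually fun y hy => hW.mem_nhds (hKW hy)
  exact hKW'.mono fun x' hx' => hrK.trans_le (measure_mono hx')

theorem allplayball_general (d k : ℕ)
    (r₁ r₂ r₃ : ℝ) (hadm : StrictAdm r₁ r₂ r₃)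
    (y₃ : Euc (d-k)) (hy : ‖y₃‖ < r₃) :
    (Sset (d-k) r₁ r₂ r₃ y₃).Nonempty ∧
    0 < volume {y₁ : Euc (d-k) | (y₁, -y₁ - y₃) ∈ Sset (d-k) r₁ r₂ r₃ y₃} ∧
    LowerSemicontinuousAt
      (fun p : Euc (d-k) × ℝ × ℝ × ℝ =>
        volume {y₁ : Euc (d-k) | (y₁, -y₁ - p.1) ∈ Sset (d-k) p.2.1 p.2.2.1 p.2.2.2 p.1})
      (y₃, r₁, r₂, r₃) := by
  have hW := isOpen_setOf_mem_Sset (d - k)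
  have hmem := smul_mem_Sset hadm hy
  exact ⟨⟨_, hmem⟩, (hW.preimage (Continuous.prodMk_right (y₃, r₁, r₂, r₃))).measure_pos volume
    ⟨_, hmem⟩, (hW.lowerSemicontinuous_measure_preimage_prodMk volume).lowerSemicontinuousAt _⟩

/-- Lemma 3.1. -/
theorem allplayball (d k : ℕ) (hd : 2 ≤ d) (hk : 1 ≤ k) (hk' : k ≤ d - 1)
    (r₁ r₂ r₃ : ℝ) (hadm : StrictAdm r₁ r₂ r₃)
    (y₃ : Euc (d-k)) (hy : ‖y₃‖ < r₃) :
    (Sset (d-k) r₁ r₂ r₃ y₃).Nonempty ∧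
    0 < volume {y₁ : Euc (d-k) | (y₁, -y₁ - y₃) ∈ Sset (d-k) r₁ r₂ r₃ y₃} ∧
    LowerSemicontinuousAt
      (fun p : Euc (d-k) × ℝ × ℝ × ℝ =>
        volume {y₁ : Euc (d-k) | (y₁, -y₁ - p.1) ∈ Sset (d-k) p.2.1 p.2.2.1 p.2.2.2 p.1})
      (y₃, r₁, r₂, r₃) :=
  allplayball_general d k r₁ r₂ r₃ hadm y₃ hy
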